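/- Let G = S_ω be the group of all permutations of ℕ with the topology of pointwise convergence, acting on H = 2^ℕ (functions ℕ → ℤ/2 with pointwise addition) by g · h = h ∘ g⁻¹. Then λ(H,G) equals the product topology on 2^ℕ. -/

import Mathlib

open TopologicalSpace Topology Filter

/-! Product-open sets are `τ`-open: a product-open `U ∋ x` contains `V · x` with
`V = {g | g · x ∈ U}` open, and product-open sets are stable under the translations defining `λ`.

Conversely, on the functions taking every value infinitely often, `τ` induces a topology coarser
than the product topology: if `e = g₀ · h` lies in a basic set `V · h`, every such `y` that agrees
with `e` on a large finite set is `g · h` for some `g ∈ V`, obtained by keeping `g₀` on a finite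
set and matching the (countably infinite) fibres of `h` and `y` elsewhere. For `λ`-open `U ∋ x`
and such an `e`, the translate `(e - x) + U` is `τ`-open and contains `e`, so `U` contains every
`z` near `x` for which `e + (z - x)` takes both values infinitely often. Two such `e₁, e₂` with
`e₁ + e₂` also of this kind give a product neighbourhood of `x` inside `U`: `e₁ + w` and `e₂ + w`
cannot both be cofinitely constant. -/

def FibersInfinite {X α : Type*} (y : X → α) : Prop :=
  ∀ a, {x | y x = a}.Infinite

lemma FibersInfinite.comp_perm {X α : Type*} {y : X → α} (hy : FibersInfinite y)
    (g : Equiv.Perm X) : FibersInfinite (y ∘ g) := fun a =>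
  (hy a).preimage (f := g) (by simp [g.surjective.range_eq])

lemma infinite_fiber_subtype_of_finite {X α : Type*} {p : X → Prop} (hp : {x | p x}.Finite) {y : X → α}
    {a : α} (ha : {x | y x = a}.Infinite) : Infinite {x : {x // ¬p x} // y x = a} :=
  have := (ha.sdiff hp).to_subtype
  Infinite.of_injective (fun x : ↥({x | y x = a} \ {x | p x}) => ⟨⟨x, x.2.2⟩, x.2.1⟩)
    fun x x' h => by simpa [Subtype.ext_iff] using h

lemma exists_perm_eqOn_and_comp_eq {X α : Type*} [Countable X] {h y : X → α} (hh : FibersInfinite h)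
    (hy : FibersInfinite y) (g₀ : Equiv.Perm X) (F : Finset X) (hF : ∀ x ∈ F, y (g₀ x) = h x) :
    ∃ g : Equiv.Perm X, (∀ x ∈ F, g x = g₀ x) ∧ y ∘ g = h := by
  classical
  have hF' : {x | g₀.symm x ∈ F}.Finite := F.finite_toSet.preimage g₀.symm.injective.injOn
  have fibers (c : α) :
      Nonempty ({x : {x // x ∉ F} // h x = c} ≃ {x : {x // g₀.symm x ∉ F} // y x = c}) :=
    have : Infinite {x : {x // x ∉ F} // h x = c} := infinite_fiber_subtype_of_finite F.finite_toSet (hh c)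
    have : Infinite {x : {x // g₀.symm x ∉ F} // y x = c} := infinite_fiber_subtype_of_finite hF' (hy c)
    nonempty_equiv_of_countable
  let g : Equiv.Perm X := Equiv.subtypeCongr (g₀.subtypeEquiv fun x => by simp)
    (Equiv.ofFiberEquiv fun c => (fibers c).some)
  refine ⟨g, fun x hx => ?_, funext fun x => ?_⟩
  · simp [g, Equiv.subtypeCongr, Equiv.sumCompl_symm_apply_of_pos hx]
  · by_cases hx : x ∈ F
    · simp [g, Equiv.subtypeCongr, Equiv.sumCompl_symm_apply_of_pos hx, hF x hx]
    · simpa [g, Equiv.subtypeCongr, Equiv.sumCompl_symm_apply_of_neg hx] using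
        Equiv.ofFiberEquiv_map (fun c => (fibers c).some) ⟨x, hx⟩

abbrev permTopology : TopologicalSpace (Equiv.Perm ℕ) :=
  induced (fun g : Equiv.Perm ℕ => (g : ℕ → ℕ)) Pi.topologicalSpace

/-- `τ(α^ℕ, S_ω)` for the action `g · h = h ∘ g⁻¹`. -/
abbrev orbitTopology (α : Type*) : TopologicalSpace (ℕ → α) :=
  generateFrom {s | ∃ V : Set (Equiv.Perm ℕ), IsOpen[permTopology] V ∧
    ∃ h : ℕ → α, s = (fun g : Equiv.Perm ℕ => h ∘ ⇑(g⁻¹)) '' V}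

section

attribute [local instance] permTopology

lemma continuous_perm_inv_apply (j : ℕ) : Continuous fun g : Equiv.Perm ℕ => g⁻¹ j := by
  refine continuous_discrete_rng.2 fun k => ?_
  have : (fun g : Equiv.Perm ℕ => g⁻¹ j) ⁻¹' {k} = (fun g : Equiv.Perm ℕ => g k) ⁻¹' {j} := by
    ext g
    simp only [Set.mem_preimage, Set.mem_singleton_iff, Equiv.Perm.inv_def, Equiv.symm_apply_eq]
    exact eq_comm
  rw [this]
  exact ((continuous_apply k).comp continuous_induced_dom).isOpen_preimage _ (isOpen_discrete _)

lemma continuous_comp_perm_inv {α : Type*} [TopologicalSpace α] (h : ℕ → α) :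
    Continuous fun g : Equiv.Perm ℕ => h ∘ ⇑(g⁻¹) :=
  continuous_pi fun j =>
    continuous_of_discreteTopology.comp (continuous_perm_inv_apply j)

lemma orbitTopology_le_pi (α : Type*) [TopologicalSpace α] :
    orbitTopology α ≤ Pi.topologicalSpace := by
  intro U hU
  refine @isOpen_iff_forall_mem_open _ (orbitTopology α) _ |>.2 fun x hx => ?_
  refine ⟨_, Set.image_preimage_subset (fun g : Equiv.Perm ℕ => x ∘ ⇑(g⁻¹)) U,
    isOpen_generateFrom_of_mem ⟨_, (continuous_comp_perm_inv x).isOpen_preimage _ hU, x, rfl⟩,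
    1, by rwa [Set.mem_preimage, inv_one, Equiv.Perm.coe_one, Function.comp_id], rfl⟩

lemma exists_finset_forall_eq_imp_mem {ι : Type*} {X : ι → Type*} [∀ i, TopologicalSpace (X i)]
    {O : Set (∀ i, X i)} (hO : IsOpen O) {x : ∀ i, X i} (hx : x ∈ O) :
    ∃ I : Finset ι, ∀ y, (∀ i ∈ I, y i = x i) → y ∈ O := by
  obtain ⟨I, t, ht, hIt⟩ := isOpen_pi_iff.1 hO x hx
  exact ⟨I, fun y hy => hIt fun i hi => hy i hi ▸ (ht i hi).2⟩

lemma exists_finset_forall_eq_imp_mem_perm {V : Set (Equiv.Perm ℕ)} (hV : IsOpen V)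
    {g₀ : Equiv.Perm ℕ} (hg₀ : g₀ ∈ V) : ∃ F : Finset ℕ, ∀ g : Equiv.Perm ℕ,
      (∀ i ∈ F, g i = g₀ i) → g ∈ V := by
  obtain ⟨O, hO, rfl⟩ := isOpen_induced_iff.1 hV
  obtain ⟨F, hF⟩ := exists_finset_forall_eq_imp_mem hO hg₀
  exact ⟨F, fun g => hF g⟩

lemma eventually_forall_finset_apply_eq {ι : Type*} {X : ι → Type*} [∀ i, TopologicalSpace (X i)]
    [∀ i, DiscreteTopology (X i)] (x : ∀ i, X i) (I : Finset ι) :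
    ∀ᶠ y in 𝓝 x, ∀ i ∈ I, y i = x i :=
  (eventually_all_finset I).2 fun i _ =>
    (continuous_apply i).continuousAt.eventually_mem (isOpen_discrete {x i} |>.mem_nhds rfl)

lemma eventually_mem_image_comp_perm_inv {α : Type*} [TopologicalSpace α] [DiscreteTopology α]
    {V : Set (Equiv.Perm ℕ)} (hV : IsOpen V) (h : ℕ → α) {e : ℕ → α}
    (he : e ∈ (fun g : Equiv.Perm ℕ => h ∘ ⇑(g⁻¹)) '' V) (hfe : FibersInfinite e) :
    ∀ᶠ y in 𝓝 e, FibersInfinite y → y ∈ (fun g : Equiv.Perm ℕ => h ∘ ⇑(g⁻¹)) '' V := by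
  obtain ⟨g₀, hg₀, rfl⟩ := he
  obtain ⟨F, hF⟩ := exists_finset_forall_eq_imp_mem_perm hV hg₀
  filter_upwards [eventually_forall_finset_apply_eq (h ∘ ⇑g₀⁻¹) (F.image g₀)] with y hy hfy
  have hfh : FibersInfinite h := by simpa [Function.comp_assoc] using hfe.comp_perm g₀
  obtain ⟨g, hgF, hgy⟩ := exists_perm_eqOn_and_comp_eq hfh hfy g₀ F fun x hx => by
    simpa using hy (g₀ x) (Finset.mem_image_of_mem g₀ hx)
  exact ⟨g, hF g hgF, by rw [← hgy]; ext; simp⟩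

lemma continuous_subtype_val_orbitTopology (α : Type*) [TopologicalSpace α] [DiscreteTopology α] :
    Continuous[_, orbitTopology α] (Subtype.val : {y : ℕ → α // FibersInfinite y} → ℕ → α) := by
  refine continuous_generateFrom_iff.2 ?_
  rintro s ⟨V, hV, h, rfl⟩
  refine isOpen_iff_eventually.2 fun y hy => ?_
  filter_upwards [continuous_subtype_val.continuousAt.eventually
    (eventually_mem_image_comp_perm_inv hV h hy y.2)] with z hz using hz z.2

lemma eventually_mem_of_isOpen_orbitTopology {α : Type*} [TopologicalSpace α] [DiscreteTopology α]
    {W : Set (ℕ → α)} (hW : IsOpen[orbitTopology α] W) {e : ℕ → α} (he : e ∈ W)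
    (hfe : FibersInfinite e) : ∀ᶠ y in 𝓝 e, FibersInfinite y → y ∈ W := by
  obtain ⟨t, ht, htW⟩ := isOpen_induced_iff.1
    (continuous_def.1 (continuous_subtype_val_orbitTopology α) W hW)
  filter_upwards [ht.mem_nhds (Set.ext_iff.1 htW ⟨e, hfe⟩ |>.2 he)] with y hy hfy
  exact Set.ext_iff.1 htW ⟨y, hfy⟩ |>.1 hy

end

lemma fibersInfinite_of_forall_exists_ge {α : Type*} {y : ℕ → α} (h : ∀ a N, ∃ n ≥ N, y n = a) :
    FibersInfinite y := fun a =>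
  Nat.frequently_atTop_iff_infinite.1 (frequently_atTop.2 (h a))

lemma FibersInfinite.add_or_add {X : Type*} {e₁ e₂ : X → ZMod 2} (he : FibersInfinite (e₁ + e₂))
    (w : X → ZMod 2) : FibersInfinite (e₁ + w) ∨ FibersInfinite (e₂ + w) := by
  by_contra! ⟨h₁, h₂⟩
  obtain ⟨a, ha⟩ := not_forall.1 h₁
  obtain ⟨b, hb⟩ := not_forall.1 h₂
  refine he (a + b + 1) ((Set.not_infinite.1 ha).union (Set.not_infinite.1 hb) |>.subset ?_)
  intro x hx
  have key : ∀ p q r a b : ZMod 2, p + q = a + b + 1 → p + r = a ∨ q + r = b := by decide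
  exact key _ _ _ _ _ hx

lemma exists_fibersInfinite_add :
    ∃ e₁ e₂ : ℕ → ZMod 2, FibersInfinite e₁ ∧ FibersInfinite e₂ ∧ FibersInfinite (e₁ + e₂) := by
  have h2 : (2 : ZMod 2) = 0 := by decide
  have h4 : (4 : ZMod 2) = 0 := by decide
  refine ⟨fun n => n, fun n => (n / 2 : ℕ), ?_, ?_, ?_⟩ <;>
    refine fibersInfinite_of_forall_exists_ge fun a N => ?_
  · exact ⟨4 * N + a.val, by omega, by simp [h4]⟩
  · have : (4 * N + 2 * a.val) / 2 = 2 * N + a.val := by omega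
    exact ⟨4 * N + 2 * a.val, by omega, by simp [this, h2]⟩
  · have : (4 * N + a.val) / 2 = 2 * N := by have := a.val_lt; omega
    exact ⟨4 * N + a.val, by omega, by simp [this, h2, h4]⟩

lemma isOpen_of_forall_isOpen_orbitTopology_add {U : Set (ℕ → ZMod 2)}
    (hU : ∀ c, IsOpen[orbitTopology (ZMod 2)] ((c + ·) '' U)) : IsOpen U := by
  obtain ⟨e₁, e₂, he₁, he₂, he₁₂⟩ := exists_fibersInfinite_add
  refine isOpen_iff_eventually.2 fun x hx => ?_
  have near (e : ℕ → ZMod 2) (he : FibersInfinite e) :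
      ∀ᶠ z in 𝓝 x, FibersInfinite (e + (z - x)) → z ∈ U := by
    have hT : Tendsto (e - x + ·) (𝓝 x) (𝓝 e) := by
      simpa using (continuous_const_add (e - x)).tendsto x
    filter_upwards [hT.eventually (eventually_mem_of_isOpen_orbitTopology (hU (e - x))
      ⟨x, hx, sub_add_cancel e x⟩ he)] with z hz hfz
    rw [← add_sub_assoc, add_sub_right_comm] at hfz
    exact (add_right_injective (e - x)).mem_set_image.1 (hz hfz)
  filter_upwards [near e₁ he₁, near e₂ he₂] with z h₁ h₂
  exact (he₁₂.add_or_add (z - x)).elim h₁ h₂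

lemma IsOpen.isOpen_orbitTopology_image_translate {α : Type*} [AddGroup α] [TopologicalSpace α]
    [IsTopologicalAddGroup α] {U : Set (ℕ → α)} (hU : IsOpen U) (h₁ h₂ : ℕ → α) :
    IsOpen[orbitTopology α] ((fun u => h₁ + u + h₂) '' U) ∧
      IsOpen[orbitTopology α] ((fun u => h₁ + (-u) + h₂) '' U) :=
  ⟨orbitTopology_le_pi α _ ((isOpenMap_add_right h₂).comp (isOpenMap_add_left h₁) U hU),
    orbitTopology_le_pi α _ ((isOpenMap_add_right h₂).comp
      ((isOpenMap_add_left h₁).comp (Homeomorph.neg _).isOpenMap) U hU)⟩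

/-- For `G = S_ω` acting on `H = 2^ℕ` by `g · h = h ∘ g⁻¹`, the topology `λ(H,G)` is the
product topology on `2^ℕ`. -/
theorem lambda_eq_product_topology :
    letI σ : TopologicalSpace (Equiv.Perm ℕ) :=
      TopologicalSpace.induced (fun g : Equiv.Perm ℕ => (g : ℕ → ℕ)) Pi.topologicalSpace
    letI τ : TopologicalSpace (ℕ → ZMod 2) :=
      generateFrom {s : Set (ℕ → ZMod 2) | ∃ V : Set (Equiv.Perm ℕ), IsOpen[σ] V ∧
        ∃ h : ℕ → ZMod 2, s = (fun g : Equiv.Perm ℕ => h ∘ ⇑(g⁻¹)) '' V}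
    ∀ lam : TopologicalSpace (ℕ → ZMod 2),
      (∀ U : Set (ℕ → ZMod 2), IsOpen[lam] U ↔ ∀ h₁ h₂ : ℕ → ZMod 2,
          IsOpen[τ] ((fun u => h₁ + u + h₂) '' U) ∧
          IsOpen[τ] ((fun u => h₁ + (-u) + h₂) '' U)) →
      lam = (Pi.topologicalSpace : TopologicalSpace (ℕ → ZMod 2)) := by
  intro lam hlam
  refine TopologicalSpace.ext_iff.2 fun U => (hlam U).trans ⟨fun hU => ?_, fun hU => ?_⟩
  · exact isOpen_of_forall_isOpen_orbitTopology_add fun c => by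
      simpa only [add_zero] using (hU c 0).1
  · exact hU.isOpen_orbitTopology_image_translate
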